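/- arXiv:2304.01475 — 2 statements merged into one kernel-verified Lean document; each statement's English description precedes it below -/
import Mathlib

section
/- Let T be a robustness tree over a type X, k > 0 a real, and S ⊆ X. Suppose x* ∈ S satisfies V̄_k(T,x*) ≤ 0 and is optimal for the original problem, i.e. V̄_k(T,x*) ≤ V̄_k(T,x) for every x ∈ S with V̄_k(T,x) ≤ 0. Then the pair (x*, V̄_k(T,x*)) is optimal for the decomposed problem: x* ∈ S, V̄_k(T,x*) ≤ 0, Dec_k(T, x*, V̄_k(T,x*)) holds, and for every x ∈ S and s ∈ ℝ with s ≤ 0 and Dec_k(T,x,s), one has V̄_k(T,x*) ≤ s. -/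
/-- The smoothed minimum of two reals (log-sum-exp under-approximation). -/
noncomputable def smin (k a b : ℝ) : ℝ :=
  -(1 / k) * Real.log (Real.exp (-k * a) + Real.exp (-k * b))

/-- A robustness tree: leaves are predicates, `maxN` are conjunction-like nodes,
`minN` are disjunction-like nodes. -/
inductive RTree (X : Type*) where
  | leaf : (X → ℝ) → RTree X
  | maxN : RTree X → RTree X → RTree X
  | minN : RTree X → RTree X → RTree X

/-- The smoothed (reversed) robustness value of a tree. -/
noncomputable def sVal {X : Type*} (k : ℝ) : RTree X → X → ℝ
  | RTree.leaf g, x => g x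
  | RTree.maxN t1 t2, x => max (sVal k t1 x) (sVal k t2 x)
  | RTree.minN t1 t2, x => smin k (sVal k t1 x) (sVal k t2 x)

/-- The decomposed-feasibility predicate of the robustness decomposition. -/
def Dec {X : Type*} (k : ℝ) : RTree X → X → ℝ → Prop
  | RTree.leaf g, x, s => g x ≤ s
  | RTree.maxN t1 t2, x, s => Dec k t1 x s ∧ Dec k t2 x s
  | RTree.minN t1 t2, x, s =>
      ∃ s1 s2 : ℝ, Dec k t1 x s1 ∧ Dec k t2 x s2 ∧ smin k s1 s2 ≤ s

/-! `Dec k T x s` holds exactly when `sVal k T x ≤ s`, because `smin k` is monotone in both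
arguments for `k > 0`. Hence the decomposed problem has the same feasible values as the
original one, and an optimum of the original problem, paired with its value, is an optimum
of the decomposed problem. -/

lemma smin_le_smin {k a b a' b' : ℝ} (hk : 0 < k) (ha : a ≤ a') (hb : b ≤ b') :
    smin k a b ≤ smin k a' b' := by
  unfold smin
  simp only [neg_mul, neg_le_neg_iff]
  gcongr

section

variable {X : Type*} {k : ℝ}

lemma Dec.mono {T : RTree X} {x : X} {s s' : ℝ} (h : Dec k T x s) (hss : s ≤ s') :
    Dec k T x s' := by
  induction T generalizing s s' with
  | leaf g => exact h.trans hss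
  | maxN t₁ t₂ ih₁ ih₂ => exact ⟨ih₁ h.1 hss, ih₂ h.2 hss⟩
  | minN t₁ t₂ _ _ =>
    obtain ⟨s₁, s₂, h₁, h₂, hs⟩ := h
    exact ⟨s₁, s₂, h₁, h₂, hs.trans hss⟩

lemma dec_sVal (T : RTree X) (x : X) : Dec k T x (sVal k T x) := by
  induction T with
  | leaf g => exact le_rfl
  | maxN t₁ t₂ ih₁ ih₂ => exact ⟨ih₁.mono (le_max_left _ _), ih₂.mono (le_max_right _ _)⟩
  | minN t₁ t₂ ih₁ ih₂ => exact ⟨_, _, ih₁, ih₂, le_rfl⟩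

lemma sVal_le_of_dec (hk : 0 < k) {T : RTree X} {x : X} {s : ℝ} (h : Dec k T x s) :
    sVal k T x ≤ s := by
  induction T generalizing s with
  | leaf g => exact h
  | maxN t₁ t₂ ih₁ ih₂ => exact max_le (ih₁ h.1) (ih₂ h.2)
  | minN t₁ t₂ ih₁ ih₂ =>
    obtain ⟨s₁, s₂, h₁, h₂, hs⟩ := h
    exact (smin_le_smin hk (ih₁ h₁) (ih₂ h₂)).trans hs

lemma dec_iff_sVal_le (hk : 0 < k) {T : RTree X} {x : X} {s : ℝ} :
    Dec k T x s ↔ sVal k T x ≤ s :=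
  ⟨sVal_le_of_dec hk, (dec_sVal T x).mono⟩

end

theorem original_optimal_implies_decomposed_optimal {X : Type*} (T : RTree X) (k : ℝ)
    (hk : 0 < k) (S : Set X) (xs : X) (hxS : xs ∈ S) (hx0 : sVal k T xs ≤ 0)
    (hopt : ∀ x ∈ S, sVal k T x ≤ 0 → sVal k T xs ≤ sVal k T x) :
    xs ∈ S ∧ sVal k T xs ≤ 0 ∧ Dec k T xs (sVal k T xs) ∧
      ∀ x ∈ S, ∀ s : ℝ, s ≤ 0 → Dec k T x s → sVal k T xs ≤ s := by
  refine ⟨hxS, hx0, dec_sVal T xs, fun x hx s hs hdec => ?_⟩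
  have hval : sVal k T x ≤ s := (dec_iff_sVal_le hk).mp hdec
  exact (hopt x hx (hval.trans hs)).trans hval
end

section
/- For every robustness tree T over a type X, every real k > 0 and every x ∈ X, the smoothing error is at most d(T)·(ln 2)/k: V(T, x) − d(T)·(ln 2)/k ≤ V̄_k(T, x) ≤ V(T, x). In particular, for fixed T and x, V̄_k(T,x) converges to V(T,x) as k → ∞, so the smoothing error can be made arbitrarily small by taking k sufficiently large. -/
/-- The exact (non-smoothed) robustness value of a tree. -/
noncomputable def eVal {X : Type*} : RTree X → X → ℝ
  | RTree.leaf g, x => g x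
  | RTree.maxN t1 t2, x => max (eVal t1 x) (eVal t2 x)
  | RTree.minN t1 t2, x => min (eVal t1 x) (eVal t2 x)

/-- The min-depth of a robustness tree. -/
def mdepth {X : Type*} : RTree X → ℕ
  | RTree.leaf _ => 0
  | RTree.maxN t1 t2 => max (mdepth t1) (mdepth t2)
  | RTree.minN t1 t2 => 1 + max (mdepth t1) (mdepth t2)

/-! Since `max u v ≤ u + v ≤ 2 max u v` for `u, v > 0`, the log-sum-exp `smin k a b` lies within
`log 2 / k` below `min a b`. A `maxN` node passes the errors of its children on unchanged and a
`minN` node adds at most `log 2 / k`, so the total error is at most `mdepth T * log 2 / k`;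
convergence as `k → ∞` follows by squeezing. -/

open Real Set Filter Topology

section SmoothedMin

variable {k : ℝ}

theorem exp_neg_mul_min (hk : 0 ≤ k) (a b : ℝ) :
    exp (-k * min a b) = max (exp (-k * a)) (exp (-k * b)) := by
  rcases le_total a b with hab | hab
  · rw [min_eq_left hab, max_eq_left (exp_le_exp.2 (by nlinarith))]
  · rw [min_eq_right hab, max_eq_right (exp_le_exp.2 (by nlinarith))]

theorem log_exp_add_exp_mem_Icc (hk : 0 ≤ k) (a b : ℝ) :
    log (exp (-k * a) + exp (-k * b)) ∈ Icc (-k * min a b) (log 2 + -k * min a b) := by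
  have hS : exp (-k * min a b) ≤ exp (-k * a) + exp (-k * b) := by
    rw [exp_neg_mul_min hk]
    exact max_le_add_of_nonneg (exp_pos _).le (exp_pos _).le
  have hS₂ : exp (-k * a) + exp (-k * b) ≤ 2 * exp (-k * min a b) := by
    rw [exp_neg_mul_min hk, two_mul]
    exact add_le_add (le_max_left _ _) (le_max_right _ _)
  constructor
  · simpa using log_le_log (exp_pos _) hS
  · simpa [log_mul two_ne_zero (exp_ne_zero _)] using log_le_log (by positivity) hS₂

theorem smin_le_min (hk : 0 < k) (a b : ℝ) : smin k a b ≤ min a b := by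
  have h := (log_exp_add_exp_mem_Icc hk.le a b).1
  calc smin k a b ≤ -(1 / k) * (-k * min a b) :=
        mul_le_mul_of_nonpos_left h (neg_nonpos.2 (by positivity))
    _ = min a b := by field_simp

theorem min_sub_le_smin (hk : 0 < k) (a b : ℝ) : min a b - log 2 / k ≤ smin k a b := by
  have h := (log_exp_add_exp_mem_Icc hk.le a b).2
  calc min a b - log 2 / k = -(1 / k) * (log 2 + -k * min a b) := by field_simp; ring
    _ ≤ smin k a b := mul_le_mul_of_nonpos_left h (neg_nonpos.2 (by positivity))

end SmoothedMin

namespace RTree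

variable {X : Type*}

theorem sVal_le_eVal {k : ℝ} (hk : 0 < k) (T : RTree X) (x : X) : sVal k T x ≤ eVal T x := by
  induction T with
  | leaf _ => exact le_rfl
  | maxN t₁ t₂ ih₁ ih₂ => exact max_le_max ih₁ ih₂
  | minN t₁ t₂ ih₁ ih₂ => exact (smin_le_min hk _ _).trans (min_le_min ih₁ ih₂)

theorem eVal_sub_le_sVal {k : ℝ} (hk : 0 < k) (T : RTree X) (x : X) :
    eVal T x - (mdepth T : ℝ) * log 2 / k ≤ sVal k T x := by
  rw [mul_div_assoc, sub_le_iff_le_add]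
  induction T with
  | leaf _ => simp [eVal, sVal, mdepth]
  | maxN t₁ t₂ ih₁ ih₂ =>
    simp only [eVal, sVal, mdepth, Nat.cast_max]
    refine max_le (ih₁.trans ?_) (ih₂.trans ?_) <;> gcongr
    exacts [le_max_left _ _, le_max_left _ _, le_max_right _ _, le_max_right _ _]
  | minN t₁ t₂ ih₁ ih₂ =>
    simp only [eVal, sVal, mdepth, Nat.cast_add, Nat.cast_one, Nat.cast_max]
    set D := max (mdepth t₁ : ℝ) (mdepth t₂)
    have hmin :
        min (eVal t₁ x) (eVal t₂ x) ≤ min (sVal k t₁ x) (sVal k t₂ x) + D * (log 2 / k) := by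
      rw [← min_add_add_right]
      refine min_le_min (ih₁.trans ?_) (ih₂.trans ?_) <;> gcongr
      exacts [le_max_left _ _, le_max_right _ _]
    linarith [min_sub_le_smin hk (sVal k t₁ x) (sVal k t₂ x)]

theorem tendsto_sVal_atTop (T : RTree X) (x : X) :
    Tendsto (fun κ : ℝ => sVal κ T x) atTop (𝓝 (eVal T x)) := by
  have hlower : Tendsto (fun κ : ℝ => eVal T x - (mdepth T : ℝ) * log 2 / κ) atTop
      (𝓝 (eVal T x)) := by
    have h0 : Tendsto (fun κ : ℝ => (mdepth T : ℝ) * log 2 / κ) atTop (𝓝 0) :=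
      tendsto_const_nhds.div_atTop tendsto_id
    simpa using tendsto_const_nhds.sub h0
  refine tendsto_of_tendsto_of_tendsto_of_le_of_le' hlower tendsto_const_nhds ?_ ?_
  all_goals filter_upwards [eventually_gt_atTop 0] with κ hκ
  exacts [eVal_sub_le_sVal hκ T x, sVal_le_eVal hκ T x]

end RTree

theorem smoothing_error_bound {X : Type*} (T : RTree X) (k : ℝ) (hk : 0 < k) (x : X) :
    (eVal T x - (mdepth T : ℝ) * Real.log 2 / k ≤ sVal k T x ∧
      sVal k T x ≤ eVal T x) ∧
      Filter.Tendsto (fun κ : ℝ => sVal κ T x) Filter.atTop (nhds (eVal T x)) :=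
  ⟨⟨T.eVal_sub_le_sVal hk x, T.sVal_le_eVal hk x⟩, T.tendsto_sVal_atTop x⟩
end
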